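/- arXiv:1001.1353 — 3 statements merged into one kernel-verified Lean document; each statement's English description precedes it below -/
import Mathlib

section
/- Let H be a real inner product space, V a subspace of H, and let x, y, z ∈ H and ω ≥ 0 be such that ⟨x, w⟩ = 0 for every w ∈ V, z ∈ V, and ‖y − z‖ ≤ ω. Then |⟨x, y⟩| ≤ ‖x‖·ω; consequently, for every δ > 0 one has (1 − δ)‖x‖² ≤ ‖x + y‖² − ‖y‖² + ω²/δ, and in the particular case ω = 0 one has the exact orthogonality identity ‖x + y‖² = ‖x‖² + ‖y‖². -/
open scoped InnerProductSpace

/-! Since `x ⟂ V` and `z ∈ V`, `⟪x, y⟫ = ⟪x, y - z⟫`, which Cauchy–Schwarz bounds by `‖x‖ ω`.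
Expanding `‖x + y‖² = ‖x‖² + 2⟪x, y⟫ + ‖y‖²` and absorbing `2‖x‖ω ≤ δ‖x‖² + ω²/δ` (Young)
gives the perturbed Pythagoras inequality. -/

section Orthogonal

variable {𝕜 E : Type*} [RCLike 𝕜] [NormedAddCommGroup E] [InnerProductSpace 𝕜 E]
  {V : Submodule 𝕜 E} {x y z : E}

theorem inner_sub_right_of_mem_orthogonal (hx : x ∈ Vᗮ) (hz : z ∈ V) :
    ⟪x, y - z⟫_𝕜 = ⟪x, y⟫_𝕜 := by
  rw [inner_sub_right, Submodule.inner_left_of_mem_orthogonal hz hx, sub_zero]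

theorem norm_inner_le_of_mem_orthogonal_of_norm_sub_le (hx : x ∈ Vᗮ) (hz : z ∈ V) {ω : ℝ}
    (hyz : ‖y - z‖ ≤ ω) : ‖⟪x, y⟫_𝕜‖ ≤ ‖x‖ * ω :=
  calc ‖⟪x, y⟫_𝕜‖ = ‖⟪x, y - z⟫_𝕜‖ := by rw [inner_sub_right_of_mem_orthogonal hx hz]
    _ ≤ ‖x‖ * ‖y - z‖ := norm_inner_le_norm x (y - z)
    _ ≤ ‖x‖ * ω := mul_le_mul_of_nonneg_left hyz (norm_nonneg x)

end Orthogonal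

section Real

variable {F : Type*} [NormedAddCommGroup F] [InnerProductSpace ℝ F] {x y : F} {ω : ℝ}

theorem one_sub_mul_norm_sq_le_of_abs_inner_le (hxy : |⟪x, y⟫_ℝ| ≤ ‖x‖ * ω) {δ : ℝ}
    (hδ : 0 < δ) : (1 - δ) * ‖x‖ ^ 2 ≤ ‖x + y‖ ^ 2 - ‖y‖ ^ 2 + ω ^ 2 / δ := by
  have young : 2 * ‖x‖ * ω ≤ δ * ‖x‖ ^ 2 + δ⁻¹ * ω ^ 2 := two_mul_le_add_mul_sq hδ
  have hneg : -(‖x‖ * ω) ≤ ⟪x, y⟫_ℝ := (abs_le.mp hxy).1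
  rw [norm_add_sq_real, div_eq_inv_mul]
  linarith

end Real

theorem quasi_orthogonality_general
    {H : Type*} [NormedAddCommGroup H] [InnerProductSpace ℝ H]
    (V : Submodule ℝ H) (x y z : H) (ω : ℝ)
    (hx : ∀ w ∈ V, inner ℝ x w = (0 : ℝ))
    (hz : z ∈ V) (hyz : ‖y - z‖ ≤ ω) :
    |inner ℝ x y| ≤ ‖x‖ * ω ∧
    (∀ δ : ℝ, 0 < δ →
      (1 - δ) * ‖x‖ ^ 2 ≤ ‖x + y‖ ^ 2 - ‖y‖ ^ 2 + ω ^ 2 / δ) ∧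
    (ω = 0 → ‖x + y‖ ^ 2 = ‖x‖ ^ 2 + ‖y‖ ^ 2) := by
  have hxV : x ∈ Vᗮ := (V.mem_orthogonal' x).mpr hx
  have hxy : |⟪x, y⟫_ℝ| ≤ ‖x‖ * ω := by
    rw [← Real.norm_eq_abs]
    exact norm_inner_le_of_mem_orthogonal_of_norm_sub_le hxV hz hyz
  refine ⟨hxy, fun δ hδ => one_sub_mul_norm_sq_le_of_abs_inner_le hxy hδ, ?_⟩
  rintro rfl
  have horth : ⟪x, y⟫_ℝ = 0 := abs_nonpos_iff.mp (by simpa using hxy)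
  rw [norm_add_sq_real, horth]
  ring

/-- Quasi-orthogonality (Theorem 3.2) in abstract inner-product-space form. -/
theorem quasi_orthogonality
    {H : Type*} [NormedAddCommGroup H] [InnerProductSpace ℝ H]
    (V : Submodule ℝ H) (x y z : H) (ω : ℝ) (hω : 0 ≤ ω)
    (hx : ∀ w ∈ V, inner ℝ x w = (0 : ℝ))
    (hz : z ∈ V) (hyz : ‖y - z‖ ≤ ω) :
    |inner ℝ x y| ≤ ‖x‖ * ω ∧
    (∀ δ : ℝ, 0 < δ →
      (1 - δ) * ‖x‖ ^ 2 ≤ ‖x + y‖ ^ 2 - ‖y‖ ^ 2 + ω ^ 2 / δ) ∧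
    (ω = 0 → ‖x + y‖ ^ 2 = ‖x‖ ^ 2 + ‖y‖ ^ 2) :=
  quasi_orthogonality_general V x y z ω hx hz hyz
end

section
/- Let β, C₀, C₁ be positive real numbers, let θ be a real number with 0 < θ ≤ 1, and let δ be a real number with 0 < δ < min{βθ/(2C₁), 1}. Let e, e', E, η, η', o be nonnegative real numbers satisfying: (1) (1 − δ)·e' ≤ e − E + (C₀/δ)·o; (2) β·η' ≤ β(1 − θ/2)·η + E; (3) e ≤ C₁·η + C₀·o. Define α := (C₁ + β(1 − θ/2)) / (C₁(1 − δ) + β). Then 0 < α < 1 and (1 − δ)·e' + β·η' ≤ α·((1 − δ)·e + β·η) + (C₀/δ + (1 − α(1 − δ))·C₀)·o. -/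
/-- One-step contraction (Theorem 5.1) in real-number form. -/
theorem one_step_contraction
    (β C₀ C₁ : ℝ) (hβ : 0 < β) (hC₀ : 0 < C₀) (hC₁ : 0 < C₁)
    (θ : ℝ) (hθ0 : 0 < θ) (hθ1 : θ ≤ 1)
    (δ : ℝ) (hδ0 : 0 < δ) (hδ : δ < min (β * θ / (2 * C₁)) 1)
    (e e' E η η' o : ℝ)
    (he : 0 ≤ e) (he' : 0 ≤ e') (hE : 0 ≤ E) (hη : 0 ≤ η) (hη' : 0 ≤ η')
    (ho : 0 ≤ o)
    (h1 : (1 - δ) * e' ≤ e - E + (C₀ / δ) * o)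
    (h2 : β * η' ≤ β * (1 - θ / 2) * η + E)
    (h3 : e ≤ C₁ * η + C₀ * o) :
    0 < (C₁ + β * (1 - θ / 2)) / (C₁ * (1 - δ) + β) ∧
    (C₁ + β * (1 - θ / 2)) / (C₁ * (1 - δ) + β) < 1 ∧
    (1 - δ) * e' + β * η' ≤
      ((C₁ + β * (1 - θ / 2)) / (C₁ * (1 - δ) + β)) * ((1 - δ) * e + β * η) +
        (C₀ / δ +
          (1 - ((C₁ + β * (1 - θ / 2)) / (C₁ * (1 - δ) + β)) * (1 - δ)) * C₀) * o := by
  have hδ1 : δ < 1 := lt_of_lt_of_le hδ (min_le_right _ _)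
  have hδβ : δ < β * θ / (2 * C₁) := lt_of_lt_of_le hδ (min_le_left _ _)
  have hδC : 2 * C₁ * δ < β * θ := by
    have h2C : (0:ℝ) < 2 * C₁ := by linarith
    calc 2 * C₁ * δ < 2 * C₁ * (β * θ / (2 * C₁)) := by
          exact mul_lt_mul_of_pos_left hδβ h2C
      _ = β * θ := by field_simp
  set D : ℝ := C₁ * (1 - δ) + β with hDdef
  set N : ℝ := C₁ + β * (1 - θ / 2) with hNdef
  have hD : 0 < D := by
    have : 0 < C₁ * (1 - δ) := mul_pos hC₁ (by linarith)
    linarith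
  have hN : 0 < N := by
    have : 0 < β * (1 - θ / 2) := mul_pos hβ (by linarith)
    simp only [hNdef]; linarith
  have hND : N < D := by
    simp only [hDdef, hNdef]
    nlinarith
  refine ⟨div_pos hN hD, (div_lt_one hD).mpr hND, ?_⟩
  set α : ℝ := N / D with hαdef
  have hDα : D * α = N := by
    rw [hαdef]; field_simp
  -- key combined inequality
  have key : (1 - δ) * e' + β * η' ≤ e + β * (1 - θ / 2) * η + (C₀ / δ) * o := by
    linarith
  have hc : 0 ≤ D - N * (1 - δ) := by
    simp only [hDdef, hNdef]
    nlinarith [mul_nonneg hβ.le (mul_nonneg (by linarith : (0:ℝ) ≤ θ/2) hδ0.le)]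
  have main : D * ((1 - δ) * e' + β * η') ≤
      N * ((1 - δ) * e + β * η) + D * ((C₀ / δ) * o) + (D - N * (1 - δ)) * (C₀ * o) := by
    have hk := mul_le_mul_of_nonneg_left key hD.le
    have hh := mul_le_mul_of_nonneg_left h3 hc
    simp only [hDdef, hNdef] at hk hh ⊢
    nlinarith [hk, hh]
  have hrw : D * (α * ((1 - δ) * e + β * η) + (C₀ / δ + (1 - α * (1 - δ)) * C₀) * o) =
      N * ((1 - δ) * e + β * η) + D * ((C₀ / δ) * o) + (D - N * (1 - δ)) * (C₀ * o) := by
    linear_combination (((1 - δ) * e + β * η) - (1 - δ) * C₀ * o) * hDα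
  have final : D * ((1 - δ) * e' + β * η') ≤
      D * (α * ((1 - δ) * e + β * η) + (C₀ / δ + (1 - α * (1 - δ)) * C₀) * o) := by
    rw [hrw]; exact main
  exact le_of_mul_le_mul_left final hD
end

section
/- Let β, C₀, C₁ be positive real numbers, θ a real number with 0 < θ ≤ 1, δ a real number with 0 < δ < min{βθ/(2C₁), 1}, and μ a real number with 0 < μ < 1. Let e, E, η, o : ℕ → ℝ be sequences of nonnegative real numbers such that for every k: (1) (1 − δ)·e(k+1) ≤ e(k) − E(k) + (C₀/δ)·o(k); (2) β·η(k+1) ≤ β(1 − θ/2)·η(k) + E(k); (3) e(k) ≤ C₁·η(k) + C₀·o(k); and (4) o(k) ≤ o(0)·μ^{2k}. Then there exist a constant C > 0 and a real number γ with 0 < γ < 1 such that (1 − δ)·e(k) + β·η(k) ≤ C·γ^k for all k ∈ ℕ. -/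
set_option maxHeartbeats 1000000 in
/-- Geometric error reduction (Theorem 5.2) in sequence form. -/
theorem geometric_error_reduction
    (β C₀ C₁ : ℝ) (hβ : 0 < β) (hC₀ : 0 < C₀) (hC₁ : 0 < C₁)
    (θ : ℝ) (hθ0 : 0 < θ) (hθ1 : θ ≤ 1)
    (δ : ℝ) (hδ0 : 0 < δ) (hδ : δ < min (β * θ / (2 * C₁)) 1)
    (μ : ℝ) (hμ0 : 0 < μ) (hμ1 : μ < 1)
    (e E η o : ℕ → ℝ)
    (he : ∀ k, 0 ≤ e k) (hE : ∀ k, 0 ≤ E k) (hη : ∀ k, 0 ≤ η k)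
    (ho : ∀ k, 0 ≤ o k)
    (h1 : ∀ k, (1 - δ) * e (k + 1) ≤ e k - E k + (C₀ / δ) * o k)
    (h2 : ∀ k, β * η (k + 1) ≤ β * (1 - θ / 2) * η k + E k)
    (h3 : ∀ k, e k ≤ C₁ * η k + C₀ * o k)
    (h4 : ∀ k, o k ≤ o 0 * μ ^ (2 * k)) :
    ∃ (C : ℝ) (γ : ℝ), 0 < C ∧ 0 < γ ∧ γ < 1 ∧
      ∀ k, (1 - δ) * e k + β * η k ≤ C * γ ^ k := by
  have hδ1 : δ < 1 := lt_of_lt_of_le hδ (min_le_right _ _)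
  have hδm : δ < β * θ / (2 * C₁) := lt_of_lt_of_le hδ (min_le_left _ _)
  set m := min (β * θ / (2 * C₁)) 1 with hm
  set ε := (δ + m) / 2 with hεdef
  have hεδ : δ < ε := by
    have : δ < m := hδ
    simp only [hεdef]; linarith
  have hεm : ε < m := by
    have : δ < m := hδ
    simp only [hεdef]; linarith
  have hε1 : ε < 1 := lt_of_lt_of_le hεm (min_le_right _ _)
  have hεθ : ε < β * θ / (2 * C₁) := lt_of_lt_of_le hεm (min_le_left _ _)
  have hε0 : 0 < ε := lt_trans hδ0 hεδ
  have h1δ : 0 < 1 - δ := by linarith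
  have hεC : ε * C₁ < β * θ / 2 := by
    have h2C : (0:ℝ) < 2 * C₁ := by positivity
    have h := (lt_div_iff₀ h2C).mp hεθ
    nlinarith [h]
  set α := max ((1 - ε) / (1 - δ)) (1 - θ / 2 + ε * C₁ / β) with hαdef
  have hα1 : α < 1 := by
    apply max_lt
    · rw [div_lt_one h1δ]; linarith
    · have : ε * C₁ / β < θ / 2 := by
        rw [div_lt_iff₀ hβ]; nlinarith
      linarith
  have hα0 : 0 < α := by
    have h : (0:ℝ) < 1 - θ / 2 + ε * C₁ / β := by
      have : 0 < ε * C₁ / β := by positivity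
      linarith
    exact lt_of_lt_of_le h (le_max_right _ _)
  set γ := max α ((1 + μ ^ 2) / 2) with hγdef
  have hγ1 : γ < 1 := max_lt hα1 (by nlinarith)
  have hγ0 : 0 < γ := lt_of_lt_of_le hα0 (le_max_left _ _)
  have hγμ : μ ^ 2 < γ := lt_of_lt_of_le (by nlinarith) (le_max_right _ _)
  have hαγ : α ≤ γ := le_max_left _ _
  set a : ℕ → ℝ := fun k => (1 - δ) * e k + β * η k with hadef
  have han : ∀ k, 0 ≤ a k := fun k =>
    add_nonneg (mul_nonneg h1δ.le (he k)) (mul_nonneg hβ.le (hη k))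
  set M := (C₀ / δ + ε * C₀) * o 0 with hMdef
  have hM0 : 0 ≤ M := mul_nonneg (by positivity) (ho 0)
  clear_value m ε α γ a M
  have hstep : ∀ k, a (k + 1) ≤ α * a k + M * μ ^ (2 * k) := by
    intro k
    have hok : o k ≤ o 0 * μ ^ (2 * k) := h4 k
    have hsum : (1 - δ) * e (k + 1) + β * η (k + 1) ≤
        e k + β * (1 - θ / 2) * η k + (C₀ / δ) * o k := by
      have := h1 k; have := h2 k; linarith
    have hek : e k ≤ (1 - ε) * e k + ε * C₁ * η k + ε * C₀ * o k := by
      nlinarith [h3 k, hε0.le]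
    have h5 : a (k + 1) ≤ (1 - ε) * e k + (β * (1 - θ / 2) + ε * C₁) * η k
        + (C₀ / δ + ε * C₀) * o k := by
      have heq : (1 - ε) * e k + (β * (1 - θ / 2) + ε * C₁) * η k
          + (C₀ / δ + ε * C₀) * o k
          = ((1 - ε) * e k + ε * C₁ * η k + ε * C₀ * o k)
            + β * (1 - θ / 2) * η k + (C₀ / δ) * o k := by ring
      have ha1 : a (k + 1) = (1 - δ) * e (k + 1) + β * η (k + 1) := by
        rw [hadef]
      rw [ha1]
      linarith [hsum, hek, heq]
    have he' : (1 - ε) * e k ≤ α * ((1 - δ) * e k) := by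
      have h : (1 - ε) / (1 - δ) ≤ α := by
        rw [hαdef]; exact le_max_left _ _
      have heq : (1 - ε) * e k = ((1 - ε) / (1 - δ)) * ((1 - δ) * e k) := by
        field_simp
      rw [heq]
      exact mul_le_mul_of_nonneg_right h (mul_nonneg h1δ.le (he k))
    have hη' : (β * (1 - θ / 2) + ε * C₁) * η k ≤ α * (β * η k) := by
      have h : 1 - θ / 2 + ε * C₁ / β ≤ α := by
        rw [hαdef]; exact le_max_right _ _
      have heq : (β * (1 - θ / 2) + ε * C₁) * η k
          = (1 - θ / 2 + ε * C₁ / β) * (β * η k) := by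
        field_simp
      rw [heq]
      exact mul_le_mul_of_nonneg_right h (mul_nonneg hβ.le (hη k))
    have ho' : (C₀ / δ + ε * C₀) * o k ≤ M * μ ^ (2 * k) := by
      have hc : (0:ℝ) ≤ C₀ / δ + ε * C₀ := by positivity
      have h := mul_le_mul_of_nonneg_left hok hc
      have heq : M * μ ^ (2 * k) = (C₀ / δ + ε * C₀) * (o 0 * μ ^ (2 * k)) := by
        rw [hMdef]; ring
      linarith [h, heq]
    have hαa : α * ((1 - δ) * e k) + α * (β * η k) = α * a k := by
      rw [hadef]; ring
    linarith [h5, he', hη', ho', hαa]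
  set K := M / (γ - μ ^ 2) with hKdef
  have hK0 : 0 ≤ K := div_nonneg hM0 (by linarith)
  clear_value K
  have hKM : K * (γ - μ ^ 2) = M := by
    rw [hKdef]
    exact div_mul_cancel₀ M (ne_of_gt (by linarith : (0:ℝ) < γ - μ ^ 2))
  refine ⟨a 0 + K + 1, γ, by have h0 := han 0; linarith, hγ0, hγ1, ?_⟩
  have key : ∀ k, a k ≤ (a 0 + K + 1) * γ ^ k - K * μ ^ (2 * k) := by
    intro k
    induction k with
    | zero => norm_num; linarith
    | succ n ih =>
      have hs := hstep n
      have hmu : μ ^ (2 * (n + 1)) = μ ^ (2 * n) * μ ^ 2 := by ring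
      have hγa : α * a n ≤ γ * a n := mul_le_mul_of_nonneg_right hαγ (han n)
      have hγi : γ * a n ≤ γ * ((a 0 + K + 1) * γ ^ n - K * μ ^ (2 * n)) :=
        mul_le_mul_of_nonneg_left ih hγ0.le
      have hpow : (0:ℝ) ≤ μ ^ (2 * n) := by positivity
      have : a (n + 1) ≤ γ * ((a 0 + K + 1) * γ ^ n - K * μ ^ (2 * n))
          + M * μ ^ (2 * n) := by linarith
      rw [hmu]
      have hfin : γ * ((a 0 + K + 1) * γ ^ n - K * μ ^ (2 * n)) + M * μ ^ (2 * n)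
          = (a 0 + K + 1) * γ ^ (n + 1) - K * (μ ^ (2 * n) * μ ^ 2)
            + (M - K * (γ - μ ^ 2)) * μ ^ (2 * n) := by ring
      rw [hfin, hKM] at this
      simpa using this
  intro k
  have := key k
  have hpow : (0:ℝ) ≤ K * μ ^ (2 * k) := by positivity
  have h0 : a k = (1 - δ) * e k + β * η k := by rw [hadef]
  linarith
end
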